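/- For all real t ≥ 1 and all v with 0 ≤ v ≤ 1, ((1-v) + v·t)/t^v ≤ 1 + (v·(1-v)/2)·(t - 1)². -/

import Mathlib

/-!
Multiplying by `t ^ (-v)` turns the claim into `0 ≤ youngGap v t`. The function `youngGap v`
vanishes at `1` and its derivative `v (1 - v) (s - 1) (1 - s ^ (-v - 1))` is nonnegative on
`[1, ∞)` when `0 ≤ v ≤ 1`, so it is nonnegative there.
-/

open Real Set

noncomputable def youngGap (v s : ℝ) : ℝ :=
  1 + v * (1 - v) / 2 * (s - 1) ^ 2 - (1 + v * (s - 1)) * s ^ (-v)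

lemma youngGap_one (v : ℝ) : youngGap v 1 = 0 := by
  simp [youngGap]

lemma hasDerivAt_youngGap (v : ℝ) {s : ℝ} (hs : s ≠ 0) :
    HasDerivAt (youngGap v) (v * (1 - v) * (s - 1) * (1 - s ^ (-v - 1))) s := by
  have hquad : HasDerivAt (fun x : ℝ => 1 + v * (1 - v) / 2 * (x - 1) ^ 2)
      (v * (1 - v) / 2 * (2 * (s - 1))) s := by
    simpa using (((hasDerivAt_id s).sub_const 1).pow 2).const_mul (v * (1 - v) / 2) |>.const_add 1
  have hlin : HasDerivAt (fun x : ℝ => 1 + v * (x - 1)) v s := by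
    simpa using ((hasDerivAt_id s).sub_const 1).const_mul v |>.const_add 1
  have hpow : HasDerivAt (fun x : ℝ => x ^ (-v)) (-v * s ^ (-v - 1)) s :=
    hasDerivAt_rpow_const (Or.inl hs)
  have hsplit : s ^ (-v) = s ^ (-v - 1) * s := by
    rw [← rpow_add_one hs, sub_add_cancel]
  refine (hquad.sub (hlin.mul hpow)).congr_deriv ?_
  rw [hsplit]
  ring

lemma monotoneOn_youngGap {v : ℝ} (hv0 : 0 ≤ v) (hv1 : v ≤ 1) :
    MonotoneOn (youngGap v) (Ici 1) := by
  have hderiv : ∀ s ∈ Ici (1 : ℝ), HasDerivAt (youngGap v)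
      (v * (1 - v) * (s - 1) * (1 - s ^ (-v - 1))) s :=
    fun s hs => hasDerivAt_youngGap v (zero_lt_one.trans_le hs).ne'
  refine monotoneOn_of_hasDerivWithinAt_nonneg (convex_Ici 1)
    (fun s hs => (hderiv s hs).continuousAt.continuousWithinAt)
    (fun s hs => (hderiv s (interior_subset hs)).hasDerivWithinAt) ?_
  intro s hs
  rw [interior_Ici] at hs
  have hs1 : 1 ≤ s := le_of_lt hs
  have hpow_le : s ^ (-v - 1) ≤ 1 := rpow_le_one_of_one_le_of_nonpos hs1 (by linarith)
  have hvv : 0 ≤ v * (1 - v) := mul_nonneg hv0 (by linarith)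
  exact mul_nonneg (mul_nonneg hvv (by linarith)) (by linarith)

theorem stmt18 (t v : ℝ) (ht : 1 ≤ t) (hv0 : 0 ≤ v) (hv1 : v ≤ 1) :
    ((1 - v) + v * t) / t ^ v ≤ 1 + (v * (1 - v) / 2) * (t - 1) ^ 2 := by
  have hgap : 0 ≤ youngGap v t :=
    youngGap_one v ▸ monotoneOn_youngGap hv0 hv1 self_mem_Ici ht ht
  have hlhs : ((1 - v) + v * t) / t ^ v = (1 + v * (t - 1)) * t ^ (-v) := by
    rw [rpow_neg (zero_le_one.trans ht), div_eq_mul_inv]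
    ring
  rw [hlhs]
  unfold youngGap at hgap
  linarith
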